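/- Let r ≥ 3 and let X : [t₀, ∞) → ℝⁿ (with t₀ > 0) be a twice continuously differentiable solution of the A-ADMM flow AᵀA (Ẍ(t) + (r/t) Ẋ(t)) + ∇V(X(t)) = 0, and let X⋆ be a minimizer of V. Then for all t ≥ t₀, ‖A(X(t) − X⋆ + (t/(r−1)) Ẋ(t))‖² ≤ 2 ℰ(t₀), where ℰ(t) = (t/(r−1))²·(V(X(t)) − V(X⋆)) + ½‖A(X(t) − X⋆ + (t/(r−1)) Ẋ(t))‖². -/

import Mathlib

open Matrix Set
open scoped RealInnerProductSpace

/-!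
Along the flow the energy `ℰ` is nonincreasing. Writing `w = X - X⋆ + (t/(r-1)) Ẋ`, the flow gives
`ẇ = (t/(r-1)) (Ẍ + (r/t) Ẋ)`, so `⟪A w, A ẇ⟫ = -(t/(r-1)) ⟪w, ∇V(X)⟫`; its `Ẋ`-part cancels the
derivative of `(t/(r-1))² V(X)`, leaving
`ℰ' = (t/(r-1)) ((2/(r-1)) (V(X) - V(X⋆)) - ⟪∇V(X), X - X⋆⟫)`.
Convexity gives `V(X) - V(X⋆) ≤ ⟪∇V(X), X - X⋆⟫`, so `ℰ' ≤ 0` as soon as `r ≥ 3`. Since `X⋆` is a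
minimizer, `‖A w(t)‖² ≤ 2 ℰ(t) ≤ 2 ℰ(t₀)`.
-/

section Energy

variable {E F : Type*} [NormedAddCommGroup E] [InnerProductSpace ℝ E]
  [NormedAddCommGroup F] [InnerProductSpace ℝ F]

theorem ConvexOn.sub_le_inner_gradient [CompleteSpace E] {V : E → ℝ}
    (hconv : ConvexOn ℝ univ V) {x : E} (hV : DifferentiableAt ℝ V x) (y : E) :
    V x - V y ≤ ⟪gradient V x, x - y⟫ := by
  have hline : HasDerivAt (V ∘ AffineMap.lineMap x y) ⟪gradient V x, y - x⟫ (0 : ℝ) := by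
    rw [inner_gradient_left]
    exact hV.hasFDerivAt.comp_hasDerivAt_of_eq 0 AffineMap.hasDerivAt_lineMap
      (AffineMap.lineMap_apply_zero x y).symm
  have hslope := (hconv.comp_affineMap (AffineMap.lineMap x y)).le_slope_of_hasDerivAt
    (mem_univ 0) (mem_univ 1) one_pos hline
  rw [slope_def_field] at hslope
  simp only [Function.comp_apply, AffineMap.lineMap_apply_zero, AffineMap.lineMap_apply_one,
    sub_zero, div_one] at hslope
  rw [← neg_sub y x, inner_neg_right]
  linarith

noncomputable def aadmmMixedTerm (r : ℝ) (X X' : ℝ → E) (xstar : E) (t : ℝ) : E :=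
  X t - xstar + (t / (r - 1)) • X' t

noncomputable def aadmmEnergy (L : E →L[ℝ] F) (V : E → ℝ) (r : ℝ) (X X' : ℝ → E) (xstar : E)
    (t : ℝ) : ℝ :=
  (t / (r - 1)) ^ 2 * (V (X t) - V xstar) + 1 / 2 * ‖L (aadmmMixedTerm r X X' xstar t)‖ ^ 2

variable {L : E →L[ℝ] F} {V : E → ℝ} {r t : ℝ} {X X' X'' : ℝ → E} {xstar : E}

theorem hasDerivAt_aadmmMixedTerm (hr : r ≠ 1) (ht : t ≠ 0)
    (hX : HasDerivAt X (X' t) t) (hX' : HasDerivAt X' (X'' t) t) :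
    HasDerivAt (aadmmMixedTerm r X X' xstar) ((t / (r - 1)) • (X'' t + (r / t) • X' t)) t := by
  have hc : r - 1 ≠ 0 := sub_ne_zero.mpr hr
  have hscalar : t / (r - 1) * (r / t) = 1 + 1 / (r - 1) := by field_simp; ring
  refine ((hX.sub_const xstar).add
    (((hasDerivAt_id t).div_const (r - 1)).smul hX')).congr_deriv ?_
  rw [smul_add, smul_smul, hscalar, add_smul, one_smul, id]
  abel

theorem hasDerivAt_aadmmEnergy [CompleteSpace E] [CompleteSpace F] (hr : r ≠ 1) (ht : t ≠ 0)
    (hV : DifferentiableAt ℝ V (X t))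
    (hX : HasDerivAt X (X' t) t) (hX' : HasDerivAt X' (X'' t) t)
    (hflow : (L.adjoint ∘L L) (X'' t + (r / t) • X' t) + gradient V (X t) = 0) :
    HasDerivAt (aadmmEnergy L V r X X' xstar)
      (t / (r - 1) * (2 / (r - 1) * (V (X t) - V xstar)
        - ⟪gradient V (X t), X t - xstar⟫)) t := by
  set G := gradient V (X t)
  have hc : r - 1 ≠ 0 := sub_ne_zero.mpr hr
  have hweight : HasDerivAt (fun s => (s / (r - 1)) ^ 2) (2 * (t / (r - 1)) / (r - 1)) t := by
    refine (((hasDerivAt_id' t).div_const (r - 1)).pow 2).congr_deriv ?_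
    norm_num
    ring
  have hvalue : HasDerivAt (fun s => V (X s) - V xstar) ⟪G, X' t⟫ t := by
    rw [inner_gradient_left]
    exact (hV.hasFDerivAt.comp_hasDerivAt t hX).sub_const _
  have hnorm := (L.hasFDerivAt.comp_hasDerivAt t
    (hasDerivAt_aadmmMixedTerm (xstar := xstar) hr ht hX hX')).norm_sq
  have hflow' : L.adjoint (L (X'' t + (r / t) • X' t)) = -G := eq_neg_of_add_eq_zero_left hflow
  have hcross :
      ⟪L (aadmmMixedTerm r X X' xstar t), L ((t / (r - 1)) • (X'' t + (r / t) • X' t))⟫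
        = -(t / (r - 1)) * (⟪G, X t - xstar⟫ + t / (r - 1) * ⟪G, X' t⟫) := by
    rw [← L.adjoint_inner_right, map_smul, map_smul, hflow',
      aadmmMixedTerm, inner_smul_right, inner_neg_right, inner_add_left, real_inner_smul_left,
      real_inner_comm G, real_inner_comm G]
    ring
  refine ((hweight.mul hvalue).add (hnorm.const_mul (1 / 2))).congr_deriv ?_
  simp only [Function.comp_apply, hcross]
  ring

theorem antitoneOn_aadmmEnergy [CompleteSpace E] [CompleteSpace F] {t₀ : ℝ}
    (hr : 3 ≤ r) (ht₀ : 0 < t₀) (hconv : ConvexOn ℝ univ V) (hV : Differentiable ℝ V)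
    (hmin : ∀ x, V xstar ≤ V x)
    (hX : ∀ t ∈ Ici t₀, HasDerivAt X (X' t) t) (hX' : ∀ t ∈ Ici t₀, HasDerivAt X' (X'' t) t)
    (hflow : ∀ t ∈ Ici t₀,
      (L.adjoint ∘L L) (X'' t + (r / t) • X' t) + gradient V (X t) = 0) :
    AntitoneOn (aadmmEnergy L V r X X' xstar) (Ici t₀) := by
  have hderiv : ∀ t ∈ Ici t₀, HasDerivAt (aadmmEnergy L V r X X' xstar)
      (t / (r - 1) * (2 / (r - 1) * (V (X t) - V xstar)
        - ⟪gradient V (X t), X t - xstar⟫)) t := fun t ht =>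
    hasDerivAt_aadmmEnergy (by linarith) (ht₀.trans_le ht).ne' (hV _) (hX t ht) (hX' t ht)
      (hflow t ht)
  refine antitoneOn_of_deriv_nonpos (convex_Ici t₀)
    (fun t ht => (hderiv t ht).continuousAt.continuousWithinAt) ?_ ?_ <;> rw [interior_Ici]
  · exact fun t ht => (hderiv t (Ioi_subset_Ici_self ht)).differentiableAt.differentiableWithinAt
  · intro t ht
    rw [(hderiv t (Ioi_subset_Ici_self ht)).deriv]
    have hgap : 0 ≤ V (X t) - V xstar := sub_nonneg.mpr (hmin (X t))
    have hcoeff : 2 / (r - 1) ≤ 1 := (div_le_one (by linarith)).mpr (by linarith)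
    refine mul_nonpos_of_nonneg_of_nonpos (div_nonneg ?_ (by linarith)) ?_
    · linarith [mem_Ioi.mp ht]
    · linarith [mul_le_mul_of_nonneg_right hcoeff hgap,
        hconv.sub_le_inner_gradient (hV (X t)) xstar]

theorem norm_sq_le_two_mul_aadmmEnergy (hmin : ∀ x, V xstar ≤ V x) (t : ℝ) :
    ‖L (aadmmMixedTerm r X X' xstar t)‖ ^ 2 ≤ 2 * aadmmEnergy L V r X X' xstar t := by
  have := mul_nonneg (sq_nonneg (t / (r - 1))) (sub_nonneg.mpr (hmin (X t)))
  rw [aadmmEnergy]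
  linarith

end Energy

theorem aadmm_flow_mixed_term_bound_general
    {m n : ℕ}
    (f : EuclideanSpace ℝ (Fin n) → ℝ) (g : EuclideanSpace ℝ (Fin m) → ℝ)
    (hf : ContDiff ℝ 1 f) (hg : ContDiff ℝ 1 g)
    (hfconv : ConvexOn ℝ Set.univ f) (hgconv : ConvexOn ℝ Set.univ g)
    (A : Matrix (Fin m) (Fin n) ℝ)
    (V : EuclideanSpace ℝ (Fin n) → ℝ)
    (hV : ∀ x, V x = f x + g (Matrix.toEuclideanLin A x))
    (r : ℝ) (hr : 3 ≤ r)
    (t₀ : ℝ) (ht₀ : 0 < t₀)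
    (X X' X'' : ℝ → EuclideanSpace ℝ (Fin n))
    (hX : ∀ t ∈ Set.Ici t₀, HasDerivAt X (X' t) t)
    (hX' : ∀ t ∈ Set.Ici t₀, HasDerivAt X' (X'' t) t)
    (hflow : ∀ t ∈ Set.Ici t₀,
      Matrix.toEuclideanLin (Aᵀ * A) (X'' t + (r / t) • X' t) + gradient V (X t) = 0)
    (Xstar : EuclideanSpace ℝ (Fin n)) (hXstar : ∀ x, V Xstar ≤ V x)
    (E : ℝ → ℝ)
    (hE : ∀ t, E t = (t / (r - 1)) ^ 2 * (V (X t) - V Xstar)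
      + (1 / 2) *
        ‖Matrix.toEuclideanLin A (X t - Xstar + (t / (r - 1)) • X' t)‖ ^ 2) :
    ∀ t ∈ Set.Ici t₀,
      ‖Matrix.toEuclideanLin A (X t - Xstar + (t / (r - 1)) • X' t)‖ ^ 2
        ≤ 2 * E t₀ := by
  intro t ht
  set L := LinearMap.toContinuousLinearMap (toEuclideanLin A)
  have hVeq : V = fun x => f x + g (L x) := funext hV
  have hVdiff : Differentiable ℝ V := hVeq ▸
    (hf.differentiable one_ne_zero).add ((hg.differentiable one_ne_zero).comp L.differentiable)
  have hVconv : ConvexOn ℝ univ V := hVeq ▸ hfconv.add (hgconv.comp_linearMap L.toLinearMap)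
  have hgram : ∀ v, toEuclideanLin (Aᵀ * A) v = (L.adjoint ∘L L) v := by
    intro v
    rw [← LinearMap.adjoint_toContinuousLinearMap, ← toEuclideanLin_conjTranspose_eq_adjoint,
      conjTranspose_eq_transpose_of_trivial]
    simp [L]
  have hanti := antitoneOn_aadmmEnergy hr ht₀ hVconv hVdiff hXstar hX hX'
    (fun t ht => hgram _ ▸ hflow t ht)
  have hEeq : E = aadmmEnergy L V r X X' Xstar := funext hE
  calc _ ≤ 2 * aadmmEnergy L V r X X' Xstar t := norm_sq_le_two_mul_aadmmEnergy hXstar t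
    _ ≤ 2 * E t₀ := by
      rw [hEeq]
      gcongr
      exact hanti self_mem_Ici ht ht

/-- **Boundedness of the mixed term in the A-ADMM Lyapunov function.**
Let `r ≥ 3` and let `X` be a twice continuously differentiable solution of the A-ADMM
flow `AᵀA(Ẍ(t) + (r/t)Ẋ(t)) + ∇V(X(t)) = 0` on `[t₀, ∞)` (with `t₀ > 0`), and let `X⋆`
be a minimizer of `V`. Then for all `t ≥ t₀`,
`‖A(X(t) − X⋆ + (t/(r−1))Ẋ(t))‖² ≤ 2ℰ(t₀)`, where
`ℰ(t) = (t/(r−1))²(V(X(t)) − V(X⋆)) + ½‖A(X(t) − X⋆ + (t/(r−1))Ẋ(t))‖²`. -/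
theorem aadmm_flow_mixed_term_bound
    {m n : ℕ} (hmn : n ≤ m)
    (f : EuclideanSpace ℝ (Fin n) → ℝ) (g : EuclideanSpace ℝ (Fin m) → ℝ)
    (hf : ContDiff ℝ 1 f) (hg : ContDiff ℝ 1 g)
    (hfconv : ConvexOn ℝ Set.univ f) (hgconv : ConvexOn ℝ Set.univ g)
    (A : Matrix (Fin m) (Fin n) ℝ) (hA : A.rank = n)
    (V : EuclideanSpace ℝ (Fin n) → ℝ)
    (hV : ∀ x, V x = f x + g (Matrix.toEuclideanLin A x))
    (r : ℝ) (hr : 3 ≤ r)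
    (t₀ : ℝ) (ht₀ : 0 < t₀)
    (X X' X'' : ℝ → EuclideanSpace ℝ (Fin n))
    (hX : ∀ t ∈ Set.Ici t₀, HasDerivAt X (X' t) t)
    (hX' : ∀ t ∈ Set.Ici t₀, HasDerivAt X' (X'' t) t)
    (hX'' : ContinuousOn X'' (Set.Ici t₀))
    (hflow : ∀ t ∈ Set.Ici t₀,
      Matrix.toEuclideanLin (Aᵀ * A) (X'' t + (r / t) • X' t) + gradient V (X t) = 0)
    (Xstar : EuclideanSpace ℝ (Fin n)) (hXstar : ∀ x, V Xstar ≤ V x)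
    (E : ℝ → ℝ)
    (hE : ∀ t, E t = (t / (r - 1)) ^ 2 * (V (X t) - V Xstar)
      + (1 / 2) *
        ‖Matrix.toEuclideanLin A (X t - Xstar + (t / (r - 1)) • X' t)‖ ^ 2) :
    ∀ t ∈ Set.Ici t₀,
      ‖Matrix.toEuclideanLin A (X t - Xstar + (t / (r - 1)) • X' t)‖ ^ 2
        ≤ 2 * E t₀ :=
  aadmm_flow_mixed_term_bound_general f g hf hg hfconv hgconv A V hV r hr t₀ ht₀ X X' X'' hX hX'
    hflow Xstar hXstar E hE
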